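/- The element g̃ = 1 − φ̃^{-1} + #I is a non-zero-divisor of ℤ[G] (hence g = 1 − φ^{-1} + #I is a non-zero-divisor of ℤ[G/I]), and the element h = 1 − (ν_I/#I)·φ̃^{-1} + ν_I is a non-zero-divisor of ℚ[G]. -/

import Mathlib

/-!
If `x` has finite order `m` and `(1 - x + n) * y = 0`, then `x * y = (n + 1) * y`, so
`y = x ^ m * y = (n + 1) ^ m * y`; in a torsion-free ring this forces `y = 0`.
For `h`, the element `e = ν_I / #I` is an idempotent and `h = (1 - e) + e * (1 - φ̃⁻¹ + #I)`;
under `A ≅ e A × (1 - e) A` this is the pair `(e * g̃, 1)`, a non-zero-divisor since `g̃` is one.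
-/

open MonoidAlgebra

/-- The sum `ν_H = Σ_{σ ∈ H} σ` of the elements of a subgroup `H` in the group algebra. -/
noncomputable def nuElt (R : Type) [CommRing R] {G : Type} [CommGroup G] [Fintype G]
    (H : Subgroup G) : MonoidAlgebra R G :=
  letI := Classical.decPred (· ∈ H)
  ∑ σ ∈ Finset.univ.filter (· ∈ H), MonoidAlgebra.of R G σ

instance {R G : Type*} [CommRing R] [IsDomain R] [CharZero R] :
    IsAddTorsionFree (MonoidAlgebra R G) :=
  .of_isTorsionFree R _

theorem one_sub_add_natCast_mem_nonZeroDivisors {A : Type*} [CommRing A] [IsAddTorsionFree A]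
    {x : A} (hx : IsOfFinOrder x) {n : ℕ} (hn : n ≠ 0) : 1 - x + n ∈ nonZeroDivisors A := by
  rw [mem_nonZeroDivisors_iff_right]
  intro y hy
  have hmul : y * x = (n + 1 : ℕ) * y := by push_cast; linear_combination -hy
  have hpow (j : ℕ) : y * x ^ j = ((n + 1) ^ j : ℕ) * y := by
    induction j with
    | zero => simp
    | succ j ih => rw [pow_succ, ← mul_assoc, ih, mul_assoc, hmul]; push_cast; ring
  obtain ⟨m, hm, hxm⟩ := isOfFinOrder_iff_pow_eq_one.mp hx
  have hN : (n + 1) ^ m - 1 ≠ 0 := by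
    have : 1 < (n + 1) ^ m := Nat.one_lt_pow hm.ne' (by omega)
    omega
  have htors : ((n + 1) ^ m - 1) • y = ((n + 1) ^ m - 1) • 0 := by
    rw [nsmul_eq_mul, smul_zero, Nat.cast_sub (Nat.one_le_pow _ _ (by omega)), sub_mul, ← hpow,
      hxm, mul_one, Nat.cast_one, one_mul, sub_self]
  exact (nsmul_right_inj hN).mp htors

theorem IsIdempotentElem.one_sub_add_mul_mem_nonZeroDivisors {A : Type*} [CommRing A] {e a : A}
    (he : IsIdempotentElem e) (ha : a ∈ nonZeroDivisors A) : 1 - e + e * a ∈ nonZeroDivisors A := by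
  rw [mem_nonZeroDivisors_iff_right] at ha ⊢
  intro y hy
  have hy₁ : y * (1 - e) = 0 := by linear_combination (1 - e) * hy + (y * a - y) * he.eq
  exact ha y (by linear_combination e * hy + a * hy₁ + (y - y * a) * he.eq)

section nuElt

variable {G : Type} [CommGroup G] [Fintype G] (H : Subgroup G)

theorem nuElt_mul_of_of_mem (R : Type) [CommRing R] {σ : G} (hσ : σ ∈ H) :
    nuElt R H * of R G σ = nuElt R H := by
  classical
  unfold nuElt
  rw [Finset.sum_mul]
  refine Eq.symm (Finset.sum_equiv (Equiv.mulRight σ⁻¹) ?_ ?_)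
  · intro τ
    simp [mul_mem_cancel_right (inv_mem hσ)]
  · intro τ _
    simp

theorem nuElt_mul_self (R : Type) [CommRing R] :
    nuElt R H * nuElt R H = Nat.card H • nuElt R H := by
  classical
  conv_lhs => enter [2]; unfold nuElt
  rw [Finset.mul_sum, Finset.sum_congr rfl fun σ hσ => nuElt_mul_of_of_mem H R
    (Finset.mem_filter.mp hσ).2, Finset.sum_const, Nat.card_eq_fintype_card, Fintype.card_subtype]

variable (K : Type) [Field K] [CharZero K]

theorem isIdempotentElem_inv_card_smul_nuElt :
    IsIdempotentElem ((Nat.card H : K)⁻¹ • nuElt K H) := by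
  have hH : (Nat.card H : K) ≠ 0 := Nat.cast_ne_zero.mpr Nat.card_pos.ne'
  rw [IsIdempotentElem, smul_mul_smul_comm, nuElt_mul_self, ← Nat.cast_smul_eq_nsmul K, smul_smul,
    mul_assoc, inv_mul_cancel₀ hH, mul_one]

theorem one_sub_inv_card_smul_nuElt_mul_add_nuElt (x : MonoidAlgebra K G) :
    1 - (Nat.card H : K)⁻¹ • (nuElt K H * x) + nuElt K H
      = 1 - (Nat.card H : K)⁻¹ • nuElt K H
        + (Nat.card H : K)⁻¹ • nuElt K H * (1 - x + (Nat.card H : MonoidAlgebra K G)) := by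
  have hH : (Nat.card H : K) ≠ 0 := Nat.cast_ne_zero.mpr Nat.card_pos.ne'
  have hcard : (Nat.card H : K)⁻¹ • nuElt K H * (Nat.card H : MonoidAlgebra K G) = nuElt K H := by
    rw [mul_comm, ← nsmul_eq_mul, ← Nat.cast_smul_eq_nsmul K, smul_smul, mul_inv_cancel₀ hH,
      one_smul]
  rw [mul_add, mul_sub, mul_one, hcard, smul_mul_assoc]
  abel

end nuElt

theorem statement10 {G : Type} [CommGroup G] [Fintype G] (I : Subgroup G) (φt : G) :
    (1 - MonoidAlgebra.of ℤ G φt⁻¹ + (Nat.card I : MonoidAlgebra ℤ G))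
      ∈ nonZeroDivisors (MonoidAlgebra ℤ G) ∧
    (MonoidAlgebra.mapDomainRingHom ℤ (QuotientGroup.mk' I)
        (1 - MonoidAlgebra.of ℤ G φt⁻¹ + (Nat.card I : MonoidAlgebra ℤ G)))
      ∈ nonZeroDivisors (MonoidAlgebra ℤ (G ⧸ I)) ∧
    (1 - (Nat.card I : ℚ)⁻¹ • (nuElt ℚ I * MonoidAlgebra.of ℚ G φt⁻¹) + nuElt ℚ I)
      ∈ nonZeroDivisors (MonoidAlgebra ℚ G) := by
  have hI : Nat.card I ≠ 0 := Nat.card_pos.ne'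
  have hφ (R : Type) [CommRing R] : IsOfFinOrder (of R G φt⁻¹) :=
    (of R G).isOfFinOrder (isOfFinOrder_of_finite _)
  refine ⟨one_sub_add_natCast_mem_nonZeroDivisors (hφ ℤ) hI, ?_, ?_⟩
  · rw [map_add, map_sub, map_one, map_natCast]
    exact one_sub_add_natCast_mem_nonZeroDivisors
      ((mapDomainRingHom ℤ (QuotientGroup.mk' I)).toMonoidHom.isOfFinOrder (hφ ℤ)) hI
  · rw [one_sub_inv_card_smul_nuElt_mul_add_nuElt]
    exact (isIdempotentElem_inv_card_smul_nuElt I ℚ).one_sub_add_mul_mem_nonZeroDivisors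
      (one_sub_add_natCast_mem_nonZeroDivisors (hφ ℚ) hI)
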